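/- arXiv:1509.04482 — 2 statements merged into one kernel-verified Lean document; each statement's English description precedes it below -/
import Mathlib

section
/- Let d ≥ 1 be an integer, let a, b > 0 and C ≥ 1 be reals, and set p = 1 + a/(a + 2b). Let T and, for each real Λ ≥ 1, T¹_Λ and T²_Λ be maps sending indicator functions of finite subsets of ℤ^d to nonnegative functions on ℤ^d. Assume that for every finite F ⊆ ℤ^d and every Λ ≥ 1: (i) T1_F(x) ≤ T¹_Λ 1_F(x) + T²_Λ 1_F(x) for every x ∈ ℤ^d; (ii) #{x ∈ ℤ^d : T¹_Λ 1_F(x) > λ} ≤ C Λ^{a} λ^{−1} #F for every λ > 0; and (iii) Σ_{x ∈ ℤ^d} (T²_Λ 1_F(x))² ≤ C Λ^{−2b} #F. Then there is a constant C' depending only on a, b, C such that #{x ∈ ℤ^d : T1_F(x) > λ} ≤ C' λ^{−p} #F for every finite F ⊆ ℤ^d and every 0 < λ ≤ 1. -/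
open MeasureTheory Set Complex
open scoped Real BigOperators

noncomputable section

def eChar (x : ℝ) : ℂ := Complex.exp (2 * (Real.pi : ℂ) * Complex.I * (x : ℂ))

def kSphere (k d : ℕ) (r : ℝ) : Set (Fin d → ℤ) :=
  {n | ∑ i, |((n i : ℝ))| ^ k = r ^ k}

def radiiSet (k d : ℕ) : Set ℝ := {r | 0 < r ∧ (kSphere k d r).Nonempty}

def latticeCount (k d : ℕ) (r : ℝ) : ℕ := (kSphere k d r).ncard

def sphAvg (k d : ℕ) (r : ℝ) (f : (Fin d → ℤ) → ℂ) (x : Fin d → ℤ) : ℂ :=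
  (latticeCount k d r : ℂ)⁻¹ * ∑' y : kSphere k d r, f (x - (y : Fin d → ℤ))

def maxFn (k d : ℕ) (R : Set ℝ) (f : (Fin d → ℤ) → ℂ) (x : Fin d → ℤ) : ℝ :=
  ⨆ r ∈ R, ‖sphAvg k d r f x‖

def Regular (k d : ℕ) : Prop :=
  ∃ c₁ c₂ r₀ : ℝ, 0 < c₁ ∧ c₁ ≤ c₂ ∧ 1 ≤ r₀ ∧
    ∀ r ∈ radiiSet k d, r₀ ≤ r →
      c₁ * r ^ ((d : ℝ) - (k : ℝ)) ≤ (latticeCount k d r : ℝ) ∧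
      (latticeCount k d r : ℝ) ≤ c₂ * r ^ ((d : ℝ) - (k : ℝ))

def indicatorFn (d : ℕ) (F : Finset (Fin d → ℤ)) : (Fin d → ℤ) → ℂ :=
  fun y => if y ∈ F then 1 else 0

def RestrictedWeakType (k d : ℕ) (R : Set ℝ) (p : ℝ) : Prop :=
  ∃ C : ℝ, 0 < C ∧ ∀ F : Finset (Fin d → ℤ), ∀ lam : ℝ, 0 < lam →
    {x : Fin d → ℤ | lam < maxFn k d R (indicatorFn d F) x}.encard ≤
      ENNReal.ofReal (C * lam ^ (-p) * (F.card : ℝ))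

def HypH (k : ℕ) (γ : ℝ) : Prop :=
  ∃ C : ℝ, 0 < C ∧ ∀ N : ℕ, ∀ t ξ : ℝ, ∀ a q : ℤ,
    1 ≤ a → a < q → (q : ℝ) ≤ (N : ℝ) → IsCoprime a q →
    |t - (a : ℝ) / (q : ℝ)| ≤ ((q : ℝ) ^ 2)⁻¹ →
    ‖∑ n ∈ Finset.Icc 1 N, eChar (t * (n : ℝ) ^ k + ξ * (n : ℝ))‖ ≤
      C * (N : ℝ) * (((q : ℝ))⁻¹ + ((N : ℝ))⁻¹ + (q : ℝ) * (N : ℝ) ^ (-(k : ℝ))) ^ γ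

def DensityLE (R : Set ℝ) (δ : ℝ) : Prop :=
  ∃ C : ℝ, 0 < C ∧ ∀ Λ : ℝ, 1 ≤ Λ →
    {r ∈ R | r ≤ Λ}.encard ≤ ENNReal.ofReal (C * Λ ^ δ)

def HypMVH (k s : ℕ) : Prop :=
  ∃ C : ℝ, 0 < C ∧ ∀ r : ℝ, 1 ≤ r →
    ((((Fintype.piFinset fun _ : Fin s => Finset.Icc (1 : ℤ) ⌊r⌋) ×ˢ
       (Fintype.piFinset fun _ : Fin s => Finset.Icc (1 : ℤ) ⌊r⌋)).filter
        (fun p => ∑ i, (p.1 i) ^ k = ∑ i, (p.2 i) ^ k)).card : ℝ) ≤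
      C * r ^ (2 * (s : ℝ) - (k : ℝ))

def alphaSum (k : ℕ) (r t ξ : ℝ) : ℂ :=
  ∑ n ∈ Finset.Icc (-⌊r⌋) ⌊r⌋, eChar (|((n : ℝ))| ^ k * t + (n : ℝ) * ξ)

def Jmean (s k N : ℕ) : ℕ :=
  (((Fintype.piFinset fun _ : Fin s => Finset.Icc (1 : ℤ) (N : ℤ)) ×ˢ
    (Fintype.piFinset fun _ : Fin s => Finset.Icc (1 : ℤ) (N : ℤ))).filter
      (fun p => ∀ l ∈ Finset.Icc 1 k, ∑ i, (p.1 i) ^ l = ∑ i, (p.2 i) ^ l)).card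

/-!
Split `{T > λ}` into `{T¹_Λ > λ/2} ∪ {T²_Λ > λ/2}`. The first set has `≲ Λ^a λ⁻¹ #F` points by
the weak `ℓ¹` bound, the second `≲ Λ^{-2b} λ⁻² #F` points by Chebyshev's inequality in `ℓ²`.
The scale `Λ = λ^{-1/(a+2b)}`, which is `≥ 1` because `λ ≤ 1`, makes both bounds equal to
`λ^{-p}` with `p = 1 + a/(a+2b)`.
-/

open scoped ENNReal

theorem encard_setOf_lt_le_tsum_sq_div {ι : Type*} (f : ι → ℝ) {c : ℝ} (hc : 0 < c) :
    ({x | c < f x}.encard : ℝ≥0∞) ≤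
      (∑' x, ENNReal.ofReal (f x ^ 2)) / ENNReal.ofReal (c ^ 2) := by
  have hc2 : ENNReal.ofReal (c ^ 2) ≠ 0 := by simp [hc.ne']
  rw [ENNReal.le_div_iff_mul_le (Or.inl hc2) (Or.inl ENNReal.ofReal_ne_top),
    ← ENNReal.tsum_set_const]
  calc ∑' _ : {x | c < f x}, ENNReal.ofReal (c ^ 2)
      ≤ ∑' x : {x | c < f x}, ENNReal.ofReal (f x ^ 2) :=
        ENNReal.tsum_le_tsum fun x =>
          ENNReal.ofReal_le_ofReal (pow_le_pow_left₀ hc.le x.2.le 2)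
    _ ≤ ∑' x, ENNReal.ofReal (f x ^ 2) :=
        ENNReal.tsum_comp_le_tsum_of_injective Subtype.val_injective _

theorem encard_setOf_lt_le_of_le_add {ι : Type*} {T f g : ι → ℝ}
    (hsplit : ∀ x, T x ≤ f x + g x) (lam : ℝ) :
    {x | lam < T x}.encard ≤ {x | lam / 2 < f x}.encard + {x | lam / 2 < g x}.encard := by
  refine (encard_mono fun x (hx : lam < T x) => ?_).trans (encard_union_le _ _)
  by_contra hx'
  simp only [mem_union, mem_ofPred_eq, not_or, not_lt] at hx'
  linarith [hsplit x]

theorem encard_setOf_lt_le_of_weak_add_sq {ι : Type*} {T f g : ι → ℝ} {A B lam : ℝ}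
    (hlam : 0 < lam) (hsplit : ∀ x, T x ≤ f x + g x)
    (hf : ({x | lam / 2 < f x}.encard : ℝ≥0∞) ≤ ENNReal.ofReal (A / (lam / 2)))
    (hg : ∑' x, ENNReal.ofReal (g x ^ 2) ≤ ENNReal.ofReal B) :
    ({x | lam < T x}.encard : ℝ≥0∞) ≤
      ENNReal.ofReal (2 * A / lam) + ENNReal.ofReal (4 * B / lam ^ 2) := by
  have hhalf : 0 < lam / 2 := half_pos hlam
  have hg' : ({x | lam / 2 < g x}.encard : ℝ≥0∞) ≤ ENNReal.ofReal (B / (lam / 2) ^ 2) := by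
    rw [ENNReal.ofReal_div_of_pos (by positivity)]
    exact (encard_setOf_lt_le_tsum_sq_div g hhalf).trans (by gcongr)
  calc ({x | lam < T x}.encard : ℝ≥0∞)
      ≤ {x | lam / 2 < f x}.encard + {x | lam / 2 < g x}.encard := by
        exact_mod_cast encard_setOf_lt_le_of_le_add hsplit lam
    _ ≤ ENNReal.ofReal (A / (lam / 2)) + ENNReal.ofReal (B / (lam / 2) ^ 2) := add_le_add hf hg'
    _ = ENNReal.ofReal (2 * A / lam) + ENNReal.ofReal (4 * B / lam ^ 2) := by
        congr 2 <;> ring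

section Balancing

variable {a b lam : ℝ}

theorem balancing_rpow_mul_inv (hq : a + 2 * b ≠ 0) (hlam : 0 < lam) :
    (lam ^ (-(a + 2 * b)⁻¹)) ^ a * lam⁻¹ = lam ^ (-(1 + a / (a + 2 * b))) := by
  rw [← Real.rpow_mul hlam.le, ← Real.rpow_neg_one lam, ← Real.rpow_add hlam]
  congr 1
  field_simp
  ring

theorem balancing_rpow_div_sq (hq : a + 2 * b ≠ 0) (hlam : 0 < lam) :
    (lam ^ (-(a + 2 * b)⁻¹)) ^ (-(2 * b)) / lam ^ 2 = lam ^ (-(1 + a / (a + 2 * b))) := by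
  rw [← Real.rpow_mul hlam.le, ← Real.rpow_two, ← Real.rpow_sub hlam]
  congr 1
  field_simp
  ring

end Balancing

theorem bourgain_ionescu_balancing_general (d : ℕ) (a b C : ℝ)
    (ha : 0 < a) (hb : 0 < b) (hC : 1 ≤ C)
    (T : Finset (Fin d → ℤ) → (Fin d → ℤ) → ℝ)
    (T1 T2 : ℝ → Finset (Fin d → ℤ) → (Fin d → ℤ) → ℝ)
    (hsplit : ∀ F : Finset (Fin d → ℤ), ∀ Λ : ℝ, 1 ≤ Λ → ∀ x : Fin d → ℤ,
      T F x ≤ T1 Λ F x + T2 Λ F x)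
    (hweak1 : ∀ F : Finset (Fin d → ℤ), ∀ Λ : ℝ, 1 ≤ Λ → ∀ lam : ℝ, 0 < lam →
      {x : Fin d → ℤ | lam < T1 Λ F x}.encard ≤
        ENNReal.ofReal (C * Λ ^ a * lam⁻¹ * (F.card : ℝ)))
    (hl2 : ∀ F : Finset (Fin d → ℤ), ∀ Λ : ℝ, 1 ≤ Λ →
      (∑' x : Fin d → ℤ, ENNReal.ofReal (T2 Λ F x ^ 2)) ≤
        ENNReal.ofReal (C * Λ ^ (-(2 * b)) * (F.card : ℝ))) :
    ∃ C' : ℝ, 0 < C' ∧ ∀ F : Finset (Fin d → ℤ), ∀ lam : ℝ, 0 < lam → lam ≤ 1 →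
      {x : Fin d → ℤ | lam < T F x}.encard ≤
        ENNReal.ofReal (C' * lam ^ (-(1 + a / (a + 2 * b))) * (F.card : ℝ)) := by
  refine ⟨6 * C, by linarith, fun F lam hlam hlam1 => ?_⟩
  have hq : 0 < a + 2 * b := by linarith
  set Λ := lam ^ (-(a + 2 * b)⁻¹)
  have hΛ : 1 ≤ Λ :=
    Real.one_le_rpow_of_pos_of_le_one_of_nonpos hlam hlam1 (neg_nonpos.2 (inv_nonneg.2 hq.le))
  have hweak := (hweak1 F Λ hΛ (lam / 2) (half_pos hlam)).trans_eq
    (congrArg ENNReal.ofReal (by ring : C * Λ ^ a * (lam / 2)⁻¹ * F.card =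
      C * Λ ^ a * F.card / (lam / 2)))
  refine (encard_setOf_lt_le_of_weak_add_sq hlam (hsplit F Λ hΛ) hweak (hl2 F Λ hΛ)).trans_eq ?_
  have hC0 : 0 ≤ C := by linarith
  rw [← ENNReal.ofReal_add (by positivity) (by positivity)]
  congr 1
  calc 2 * (C * Λ ^ a * F.card) / lam + 4 * (C * Λ ^ (-(2 * b)) * F.card) / lam ^ 2
      = 2 * C * F.card * (Λ ^ a * lam⁻¹) + 4 * C * F.card * (Λ ^ (-(2 * b)) / lam ^ 2) := by
        ring
    _ = 6 * C * lam ^ (-(1 + a / (a + 2 * b))) * F.card := by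
        rw [balancing_rpow_mul_inv hq.ne' hlam, balancing_rpow_div_sq hq.ne' hlam]
        ring

/-- Abstract Bourgain–Ionescu balancing argument. -/
theorem bourgain_ionescu_balancing (d : ℕ) (hd : 1 ≤ d) (a b C : ℝ)
    (ha : 0 < a) (hb : 0 < b) (hC : 1 ≤ C)
    (T : Finset (Fin d → ℤ) → (Fin d → ℤ) → ℝ)
    (T1 T2 : ℝ → Finset (Fin d → ℤ) → (Fin d → ℤ) → ℝ)
    (hTnn : ∀ F x, 0 ≤ T F x)
    (hT1nn : ∀ Λ F x, 0 ≤ T1 Λ F x)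
    (hT2nn : ∀ Λ F x, 0 ≤ T2 Λ F x)
    (hsplit : ∀ F : Finset (Fin d → ℤ), ∀ Λ : ℝ, 1 ≤ Λ → ∀ x : Fin d → ℤ,
      T F x ≤ T1 Λ F x + T2 Λ F x)
    (hweak1 : ∀ F : Finset (Fin d → ℤ), ∀ Λ : ℝ, 1 ≤ Λ → ∀ lam : ℝ, 0 < lam →
      {x : Fin d → ℤ | lam < T1 Λ F x}.encard ≤
        ENNReal.ofReal (C * Λ ^ a * lam⁻¹ * (F.card : ℝ)))
    (hl2 : ∀ F : Finset (Fin d → ℤ), ∀ Λ : ℝ, 1 ≤ Λ →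
      (∑' x : Fin d → ℤ, ENNReal.ofReal (T2 Λ F x ^ 2)) ≤
        ENNReal.ofReal (C * Λ ^ (-(2 * b)) * (F.card : ℝ))) :
    ∃ C' : ℝ, 0 < C' ∧ ∀ F : Finset (Fin d → ℤ), ∀ lam : ℝ, 0 < lam → lam ≤ 1 →
      {x : Fin d → ℤ | lam < T F x}.encard ≤
        ENNReal.ofReal (C' * lam ^ (-(1 + a / (a + 2 * b))) * (F.card : ℝ)) :=
  bourgain_ionescu_balancing_general d a b C ha hb hC T T1 T2 hsplit hweak1 hl2
end
end

section
/- For all integers s ≥ 1 and k ≥ 2 there is a constant C = C(s, k) such that for every real r ≥ 1, ∫_0^1 |α_r(t, 0)|^{2s} dt ≤ C r^{k(k−1)/2} J_{s,k}(⌊r⌋ + 1). -/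
open MeasureTheory Set Complex
open scoped Real BigOperators

noncomputable section

/-!
By orthogonality the moment counts the pairs `x, y ∈ [-N, N]^s`, `N = ⌊r⌋`, with
`∑ |xᵢ|^k = ∑ |yᵢ|^k`. Forgetting signs costs a factor `4^s` and leaves the solutions of
`∑ xᵢ^k = ∑ yᵢ^k` in `[0, N]^s`. Sort these by the vector of differences `∑ xᵢ^j - ∑ yᵢ^j`,
`1 ≤ j < k`: it takes at most `∏_{1≤j<k} (2sN^j + 1) ≪ r^{k(k-1)/2}` values, and by
Cauchy–Schwarz no class is larger than the diagonal one, i.e. the set of solutions of the full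
Vinogradov system in `[0, N]^s`. By translation invariance of that system, this set has
`J_{s,k}(N + 1)` elements.
-/

open Finset

section Collisions

variable {γ β : Type*} [DecidableEq β]

def collisions (T : Finset γ) (v : γ → β) : Finset (γ × γ) :=
  (T ×ˢ T).filter fun p => v p.1 = v p.2

variable [AddCommGroup β]

lemma card_filter_sub_eq (T : Finset γ) (v : γ → β) (w : β) :
    #{p ∈ T ×ˢ T | v p.1 - v p.2 = w} =
      ∑ c ∈ T.image v, #{a ∈ T | v a = c} * #{a ∈ T | v a = c - w} := by
  rw [card_eq_sum_card_fiberwise (f := fun p => v p.1) (t := T.image v)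
    fun p hp => mem_image_of_mem v (mem_product.1 (mem_filter.1 hp).1).1]
  refine sum_congr rfl fun c _ => ?_
  rw [filter_filter, ← card_product, ← filter_product]
  congr 1
  refine filter_congr fun p _ => ⟨fun ⟨hw, hc⟩ => ⟨hc, ?_⟩, fun ⟨hc, hw⟩ => ⟨?_, hc⟩⟩
  · rw [← hw, ← hc, sub_sub_cancel]
  · rw [hc, hw, sub_sub_cancel]

lemma card_filter_sub_eq_le_card_collisions (T : Finset γ) (v : γ → β) (w : β) :
    #{p ∈ T ×ˢ T | v p.1 - v p.2 = w} ≤ #(collisions T v) := by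
  set U := T.image v
  set f : β → ℕ := fun c => #{a ∈ T | v a = c}
  have hcoll : #(collisions T v) = ∑ c ∈ U, f c * f c := by
    have h := card_filter_sub_eq T v 0
    simp only [sub_eq_zero, sub_zero] at h
    exact h
  have hshift : ∑ c ∈ U, f (c - w) ^ 2 ≤ ∑ c ∈ U, f c ^ 2 := by
    rw [← sum_image (g := (· - w)) (f := fun c => f c ^ 2) sub_left_injective.injOn]
    refine sum_le_sum_of_ne_zero fun c _ hc => ?_
    obtain ⟨a, ha⟩ := card_ne_zero.1 (pow_ne_zero_iff two_ne_zero |>.1 hc)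
    exact mem_image.2 ⟨a, (mem_filter.1 ha).1, (mem_filter.1 ha).2⟩
  rw [card_filter_sub_eq, hcoll]
  refine (pow_le_pow_iff_left₀ (Nat.zero_le _) (Nat.zero_le _) two_ne_zero).1 ?_
  calc (∑ c ∈ U, f c * f (c - w)) ^ 2 ≤ (∑ c ∈ U, f c ^ 2) * ∑ c ∈ U, f (c - w) ^ 2 :=
        sum_mul_sq_le_sq_mul_sq U f fun c => f (c - w)
    _ ≤ (∑ c ∈ U, f c ^ 2) * ∑ c ∈ U, f c ^ 2 := Nat.mul_le_mul_left _ hshift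
    _ = (∑ c ∈ U, f c * f c) ^ 2 := by simp only [sq]

lemma card_le_card_image_sub_mul_card_collisions {T : Finset γ} {S : Finset (γ × γ)}
    (hS : S ⊆ T ×ˢ T) (v : γ → β) :
    #S ≤ #(S.image fun p => v p.1 - v p.2) * #(collisions T v) := by
  rw [mul_comm]
  exact card_le_mul_card_image S _ fun w _ =>
    (Finset.card_le_card (filter_subset_filter _ hS)).trans
      (card_filter_sub_eq_le_card_collisions T v w)

end Collisions

section IntBox

variable {ι β : Type*}

lemma eq_of_abs_eq_of_neg_iff {x y : ι → ℤ} (habs : |x| = |y|) (hneg : ∀ i, x i < 0 ↔ y i < 0) :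
    x = y := by
  funext i
  have hi := hneg i
  rcases abs_eq_abs.1 (congrFun habs i) with h | h <;> omega

variable [Fintype ι] [DecidableEq ι]

variable (ι) in
def intBox (a b : ℤ) : Finset (ι → ℤ) := Fintype.piFinset fun _ => Icc a b

@[simp]
lemma mem_intBox {a b : ℤ} {x : ι → ℤ} : x ∈ intBox ι a b ↔ ∀ i, a ≤ x i ∧ x i ≤ b := by
  simp [intBox]

lemma card_collisions_abs_le [DecidableEq β] (g : (ι → ℤ) → β) (N : ℤ) :
    #(collisions (intBox ι (-N) N) fun x => g |x|) ≤
      4 ^ Fintype.card ι * #(collisions (intBox ι 0 N) g) := by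
  refine card_le_mul_card_image_of_maps_to (f := fun p => (|p.1|, |p.2|))
    (fun p hp => ?_) _ fun q _ => ?_
  · simp only [collisions, mem_filter, mem_product, mem_intBox, Pi.abs_apply] at hp ⊢
    exact ⟨⟨fun i => ⟨abs_nonneg _, abs_le.2 (hp.1.1 i)⟩,
      fun i => ⟨abs_nonneg _, abs_le.2 (hp.1.2 i)⟩⟩, hp.2⟩
  let negFlags (x : ι → ℤ) : ι → Bool := fun i => decide (x i < 0)
  calc _ ≤ #(univ : Finset ((ι → Bool) × (ι → Bool))) :=
        card_le_card_of_injOn (fun p => (negFlags p.1, negFlags p.2))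
          (fun _ _ => mem_coe.2 (mem_univ _)) fun p hp p' hp' h => ?_
    _ = 4 ^ Fintype.card ι := by simp [← mul_pow]
  simp only [coe_filter, Set.mem_ofPred_eq, Prod.ext_iff] at hp hp'
  simp only [Prod.ext_iff, negFlags, funext_iff, decide_eq_decide] at h
  exact Prod.ext (eq_of_abs_eq_of_neg_iff (hp.2.1.trans hp'.2.1.symm) h.1)
    (eq_of_abs_eq_of_neg_iff (hp.2.2.trans hp'.2.2.symm) h.2)

end IntBox

lemma eChar_add (x y : ℝ) : eChar (x + y) = eChar x * eChar y := by
  rw [eChar, eChar, eChar, ← Complex.exp_add]; push_cast; ring_nf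

lemma eChar_sum {γ : Type*} (T : Finset γ) (f : γ → ℝ) :
    eChar (∑ c ∈ T, f c) = ∏ c ∈ T, eChar (f c) := by
  simp only [eChar, Complex.ofReal_sum, mul_sum, Complex.exp_sum]

lemma conj_eChar (x : ℝ) : starRingEnd ℂ (eChar x) = eChar (-x) := by
  rw [eChar, eChar, ← Complex.exp_conj]
  simp only [map_mul, Complex.conj_I, Complex.conj_ofReal, map_ofNat]
  push_cast; ring_nf

lemma continuous_eChar_const_mul (c : ℝ) : Continuous fun t => eChar (c * t) := by
  unfold eChar; fun_prop

lemma integral_eChar_intCast_mul (m : ℤ) :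
    ∫ t in (0 : ℝ)..1, eChar (m * t) = if m = 0 then 1 else 0 := by
  split_ifs with hm
  · simp [hm, eChar]
  have hc : 2 * (π : ℂ) * I * m ≠ 0 := by simp [Real.pi_ne_zero, hm]
  have hperiod : Complex.exp (2 * π * I * m) = 1 := by
    rw [← Complex.exp_int_mul_two_pi_mul_I m]; ring_nf
  simp only [eChar, Complex.ofReal_mul, Complex.ofReal_intCast, ← mul_assoc]
  rw [integral_exp_mul_complex hc]
  simp [hperiod]

section Orthogonality

variable {γ : Type*}

lemma integral_norm_sq_sum_eChar (T : Finset γ) (A : γ → ℤ) :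
    ∫ t in (0 : ℝ)..1, ‖∑ c ∈ T, eChar (A c * t)‖ ^ 2 = #(collisions T A) := by
  have hexpand (t : ℝ) : ((‖∑ c ∈ T, eChar (A c * t)‖ ^ 2 : ℝ) : ℂ) =
      ∑ p ∈ T ×ˢ T, eChar (((A p.1 - A p.2 : ℤ) : ℝ) * t) := by
    rw [Complex.ofReal_pow, ← Complex.mul_conj', map_sum, sum_mul_sum, sum_product]
    refine sum_congr rfl fun a _ => sum_congr rfl fun b _ => ?_
    rw [conj_eChar, ← eChar_add]; push_cast; ring_nf
  apply Complex.ofReal_injective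
  rw [← intervalIntegral.integral_ofReal]
  simp_rw [hexpand]
  rw [intervalIntegral.integral_finsetSum fun p _ =>
    (continuous_eChar_const_mul _).intervalIntegrable _ _]
  simp only [integral_eChar_intCast_mul, sub_eq_zero, sum_boole, collisions, Complex.ofReal_natCast]

lemma sum_eChar_pow (T : Finset γ) (w : γ → ℤ) (s : ℕ) (t : ℝ) :
    (∑ n ∈ T, eChar (w n * t)) ^ s =
      ∑ x ∈ Fintype.piFinset fun _ : Fin s => T, eChar (((∑ i, w (x i) : ℤ) : ℝ) * t) := by
  rw [← Fin.prod_const, prod_univ_sum]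
  refine sum_congr rfl fun x _ => ?_
  rw [Int.cast_sum, sum_mul, eChar_sum]

lemma integral_norm_pow_sum_eChar (T : Finset γ) (w : γ → ℤ) (s : ℕ) :
    ∫ t in (0 : ℝ)..1, ‖∑ n ∈ T, eChar (w n * t)‖ ^ (2 * s) =
      #(collisions (Fintype.piFinset fun _ : Fin s => T) fun x => ∑ i, w (x i)) := by
  have hpow (t : ℝ) : ‖∑ n ∈ T, eChar (w n * t)‖ ^ (2 * s) =
      ‖∑ x ∈ Fintype.piFinset fun _ : Fin s => T, eChar (((∑ i, w (x i) : ℤ) : ℝ) * t)‖ ^ 2 := by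
    rw [← sum_eChar_pow, norm_pow, ← pow_mul, mul_comm]
  simp_rw [hpow]
  exact integral_norm_sq_sum_eChar _ _

end Orthogonality

section PowerSums

variable {ι : Type*} [Fintype ι]

def powerSums (k : ℕ) (x : ι → ℤ) : Fin k → ℤ := fun j => ∑ i, x i ^ ((j : ℕ) + 1)

lemma sum_pow_eq_of_powerSums_eq {k l : ℕ} {x y : ι → ℤ} (h : powerSums k x = powerSums k y)
    (hl : l ≤ k) : ∑ i, x i ^ l = ∑ i, y i ^ l := by
  rcases l with _ | l
  · simp
  · exact congrFun h ⟨l, hl⟩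

lemma powerSums_eq_iff {k : ℕ} {x y : ι → ℤ} :
    powerSums k x = powerSums k y ↔ ∀ l ∈ Finset.Icc 1 k, ∑ i, x i ^ l = ∑ i, y i ^ l :=
  ⟨fun h l hl => sum_pow_eq_of_powerSums_eq h (Finset.mem_Icc.1 hl).2,
    fun h => funext fun j => h _ (Finset.mem_Icc.2 ⟨by omega, j.isLt⟩)⟩

lemma sum_add_const_pow (x : ι → ℤ) (c : ℤ) (l : ℕ) :
    ∑ i, (x i + c) ^ l = ∑ m ∈ range (l + 1), (∑ i, x i ^ m) * c ^ (l - m) * l.choose m := by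
  simp_rw [add_pow, sum_mul]
  exact sum_comm

lemma powerSums_add_const {k : ℕ} {x y : ι → ℤ} (h : powerSums k x = powerSums k y) (c : ℤ) :
    powerSums k (fun i => x i + c) = powerSums k fun i => y i + c := by
  funext j
  simp only [powerSums, sum_add_const_pow]
  refine sum_congr rfl fun m hm => ?_
  rw [sum_pow_eq_of_powerSums_eq h (by have := mem_range.1 hm; omega)]

variable [DecidableEq ι]

lemma card_collisions_powerSums_add_const (k : ℕ) (a b c : ℤ) :
    #(collisions (intBox ι a b) (powerSums k)) =
      #(collisions (intBox ι (a + c) (b + c)) (powerSums k)) := by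
  refine card_nbij' (fun p => (fun i => p.1 i + c, fun i => p.2 i + c))
    (fun p => (fun i => p.1 i + -c, fun i => p.2 i + -c)) ?_ ?_ ?_ ?_
  · intro p hp
    simp only [collisions, coe_filter, Set.mem_ofPred_eq, mem_product, mem_intBox] at hp ⊢
    refine ⟨⟨fun i => ?_, fun i => ?_⟩, powerSums_add_const hp.2 c⟩
    · have := hp.1.1 i; omega
    · have := hp.1.2 i; omega
  · intro p hp
    simp only [collisions, coe_filter, Set.mem_ofPred_eq, mem_product, mem_intBox] at hp ⊢
    refine ⟨⟨fun i => ?_, fun i => ?_⟩, powerSums_add_const hp.2 (-c)⟩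
    · have := hp.1.1 i; omega
    · have := hp.1.2 i; omega
  · intro p _; simp
  · intro p _; simp

lemma Jmean_eq_card_collisions (s k N : ℕ) :
    Jmean s k N = #(collisions (intBox (Fin s) 1 N) (powerSums k)) := by
  unfold Jmean collisions
  congr 1
  exact filter_congr fun p _ => (powerSums_eq_iff (ι := Fin s)).symm

lemma sum_pow_mem_Icc {N : ℤ} {x : ι → ℤ} (hx : x ∈ intBox ι 0 N) (l : ℕ) :
    0 ≤ ∑ i, x i ^ l ∧ ∑ i, x i ^ l ≤ Fintype.card ι * N ^ l := by
  rw [mem_intBox] at hx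
  refine ⟨sum_nonneg fun i _ => pow_nonneg (hx i).1 l, ?_⟩
  calc ∑ i, x i ^ l ≤ ∑ _i : ι, N ^ l := sum_le_sum fun i _ => pow_le_pow_left₀ (hx i).1 (hx i).2 l
    _ = Fintype.card ι * N ^ l := by simp

lemma card_image_powerSums_sub_le (m : ℕ) {N : ℤ} (hN : 0 ≤ N) :
    (#((collisions (intBox ι 0 N) fun x => ∑ i, x i ^ (m + 1)).image
        fun p => powerSums (m + 1) p.1 - powerSums (m + 1) p.2) : ℤ) ≤
      ∏ j : Fin m, (2 * Fintype.card ι * N ^ ((j : ℕ) + 1) + 1) := by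
  set B : Fin m → ℤ := fun j => Fintype.card ι * N ^ ((j : ℕ) + 1)
  set D := (collisions (intBox ι 0 N) fun x => ∑ i, x i ^ (m + 1)).image
    fun p => powerSums (m + 1) p.1 - powerSums (m + 1) p.2
  -- The last coordinate of every difference vanishes, so `Fin.init` is injective on `D`.
  have hlast : ∀ w ∈ D, w (Fin.last m) = 0 := by
    intro w hw
    obtain ⟨p, hp, rfl⟩ := mem_image.1 hw
    simp [powerSums, (mem_filter.1 hp).2]
  calc _ ≤ (#(Fintype.piFinset fun j => Icc (-B j) (B j)) : ℤ) := by
        refine Nat.cast_le.2 (card_le_card_of_injOn Fin.init (fun w hw => ?_)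
          fun w hw w' hw' h => ?_)
        · obtain ⟨p, hp, rfl⟩ := mem_image.1 (mem_coe.1 hw)
          simp only [collisions, mem_filter, mem_product] at hp
          rw [mem_coe, Fintype.mem_piFinset]
          intro j
          have h1 := sum_pow_mem_Icc hp.1.1 ((j : ℕ) + 1)
          have h2 := sum_pow_mem_Icc hp.1.2 ((j : ℕ) + 1)
          simp only [Fin.init, Pi.sub_apply, powerSums, Fin.val_castSucc, Finset.mem_Icc, B]
          constructor <;> linarith
        · rw [← Fin.snoc_init_self w, ← Fin.snoc_init_self w', h, hlast w hw, hlast w' hw']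
    _ = ∏ j : Fin m, (2 * Fintype.card ι * N ^ ((j : ℕ) + 1) + 1) := by
        rw [Fintype.card_piFinset, Nat.cast_prod]
        refine prod_congr rfl fun j _ => ?_
        have hB : 0 ≤ B j := by positivity
        rw [Int.card_Icc, Int.toNat_of_nonneg (by omega)]
        ring

lemma card_collisions_sum_pow_le (m : ℕ) {N : ℤ} (hN : 0 ≤ N) :
    (#(collisions (intBox ι 0 N) fun x => ∑ i, x i ^ (m + 1)) : ℤ) ≤
      (∏ j : Fin m, (2 * Fintype.card ι * N ^ ((j : ℕ) + 1) + 1)) *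
        #(collisions (intBox ι 0 N) (powerSums (m + 1))) := by
  calc _ ≤ ((#((collisions (intBox ι 0 N) fun x => ∑ i, x i ^ (m + 1)).image
          fun p => powerSums (m + 1) p.1 - powerSums (m + 1) p.2) *
          #(collisions (intBox ι 0 N) (powerSums (m + 1))) : ℕ) : ℤ) :=
        Nat.cast_le.2 (card_le_card_image_sub_mul_card_collisions (filter_subset _ _) _)
    _ ≤ _ := by
        push_cast
        exact mul_le_mul_of_nonneg_right (card_image_powerSums_sub_le m hN) (Nat.cast_nonneg _)

lemma card_collisions_sum_abs_pow_le (m : ℕ) {N : ℤ} (hN : 0 ≤ N) :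
    (#(collisions (intBox ι (-N) N) fun x => ∑ i, |x i| ^ (m + 1)) : ℤ) ≤
      4 ^ Fintype.card ι * ((∏ j : Fin m, (2 * Fintype.card ι * N ^ ((j : ℕ) + 1) + 1)) *
        #(collisions (intBox ι 1 (N + 1)) (powerSums (m + 1)))) := by
  have habs := card_collisions_abs_le (fun y : ι → ℤ => ∑ i, y i ^ (m + 1)) N
  simp only [Pi.abs_apply] at habs
  have hshift := card_collisions_powerSums_add_const (ι := ι) (m + 1) 0 N 1
  rw [zero_add] at hshift
  rw [← hshift]
  calc _ ≤ ((4 ^ Fintype.card ι * #(collisions (intBox ι 0 N) fun x => ∑ i, x i ^ (m + 1)) : ℕ)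
        : ℤ) := Nat.cast_le.2 habs
    _ ≤ _ := by
        push_cast
        exact mul_le_mul_of_nonneg_left (card_collisions_sum_pow_le m hN) (by positivity)

end PowerSums

lemma prod_two_mul_pow_add_one_le {c N r : ℝ} (hc : 0 ≤ c) (hN : 1 ≤ N) (hNr : N ≤ r) (m : ℕ) :
    ∏ j : Fin m, (2 * c * N ^ ((j : ℕ) + 1) + 1) ≤
      (2 * c + 1) ^ m * r ^ ∑ j : Fin m, ((j : ℕ) + 1) := by
  calc _ ≤ ∏ j : Fin m, ((2 * c + 1) * r ^ ((j : ℕ) + 1)) :=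
        prod_le_prod (fun j _ => by positivity) fun j _ => ?_
    _ = _ := by rw [prod_mul_distrib, prod_const, card_univ, Fintype.card_fin, prod_pow_eq_pow_sum]
  have h1 : 1 ≤ N ^ ((j : ℕ) + 1) := one_le_pow₀ hN
  have h2 : N ^ ((j : ℕ) + 1) ≤ r ^ ((j : ℕ) + 1) := pow_le_pow_left₀ (by linarith) hNr _
  nlinarith

lemma two_mul_sum_fin_add_one (m : ℕ) : 2 * ∑ j : Fin m, ((j : ℕ) + 1) = (m + 1) * m := by
  have hshift := sum_range_succ' (fun i => i) m
  have hgauss := sum_range_id_mul_two (m + 1)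
  rw [add_zero] at hshift
  rw [Nat.add_sub_cancel, hshift] at hgauss
  rw [Fin.sum_univ_eq_sum_range (· + 1), ← hgauss, mul_comm]

lemma alphaSum_zero (k : ℕ) (r t : ℝ) :
    alphaSum k r t 0 = ∑ n ∈ Icc (-⌊r⌋) ⌊r⌋, eChar (((|n| ^ k : ℤ) : ℝ) * t) := by
  simp [alphaSum]

theorem moment_bounded_by_vinogradov_general (s k : ℕ) (hk : 2 ≤ k) :
    ∃ C : ℝ, 0 < C ∧ ∀ r : ℝ, 1 ≤ r →
      ∫ t in (0 : ℝ)..1, ‖alphaSum k r t 0‖ ^ (2 * s) ≤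
        C * r ^ (((k * (k - 1) : ℕ) : ℝ) / 2) * (Jmean s k (⌊r⌋₊ + 1) : ℝ) := by
  obtain ⟨m, rfl⟩ : ∃ m, k = m + 1 := ⟨k - 1, by omega⟩
  refine ⟨4 ^ s * (2 * s + 1) ^ m, by positivity, fun r hr => ?_⟩
  set N := ⌊r⌋
  have hN : 1 ≤ N := Int.le_floor.2 (by exact_mod_cast hr)
  have hNr : (N : ℝ) ≤ r := Int.floor_le r
  have hmoment : ∫ t in (0 : ℝ)..1, ‖alphaSum (m + 1) r t 0‖ ^ (2 * s) =
      #(collisions (intBox (Fin s) (-N) N) fun x => ∑ i, |x i| ^ (m + 1)) := by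
    simp_rw [alphaSum_zero, integral_norm_pow_sum_eChar]
    rfl
  have hJ : #(collisions (intBox (Fin s) 1 (N + 1)) (powerSums (m + 1))) =
      Jmean s (m + 1) (⌊r⌋₊ + 1) := by
    rw [Jmean_eq_card_collisions]
    push_cast [Int.natCast_floor_eq_floor (by linarith : (0 : ℝ) ≤ r)]
    rfl
  have hcount := card_collisions_sum_abs_pow_le (ι := Fin s) m (by omega : 0 ≤ N)
  rw [hJ, Fintype.card_fin] at hcount
  have hexp : (((m + 1) * (m + 1 - 1) : ℕ) : ℝ) / 2 = ((∑ j : Fin m, ((j : ℕ) + 1) : ℕ) : ℝ) := by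
    rw [Nat.add_sub_cancel, ← two_mul_sum_fin_add_one]
    push_cast
    ring
  rw [hmoment, hexp, Real.rpow_natCast]
  calc _ ≤ 4 ^ s * ((∏ j : Fin m, (2 * s * (N : ℝ) ^ ((j : ℕ) + 1) + 1)) *
        (Jmean s (m + 1) (⌊r⌋₊ + 1) : ℝ)) := by exact_mod_cast hcount
    _ ≤ 4 ^ s * (((2 * s + 1) ^ m * r ^ ∑ j : Fin m, ((j : ℕ) + 1)) *
        (Jmean s (m + 1) (⌊r⌋₊ + 1) : ℝ)) := by
      gcongr
      exact prod_two_mul_pow_add_one_le (by positivity) (by exact_mod_cast hN) hNr m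
    _ = _ := by ring

theorem moment_bounded_by_vinogradov (s k : ℕ) (hs : 1 ≤ s) (hk : 2 ≤ k) :
    ∃ C : ℝ, 0 < C ∧ ∀ r : ℝ, 1 ≤ r →
      ∫ t in (0 : ℝ)..1, ‖alphaSum k r t 0‖ ^ (2 * s) ≤
        C * r ^ (((k * (k - 1) : ℕ) : ℝ) / 2) * (Jmean s k (⌊r⌋₊ + 1) : ℝ) :=
  moment_bounded_by_vinogradov_general s k hk

end
end
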